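/- If X ⊂ ℂ^N is compact and every closed ball intersected with a closed set Σ ⊂ ℂ^{N+1} containing Y = τ^{-1}(X) is polynomially convex (τ the projection of Σ onto the first N coordinates), then the polynomial hull Ŷ of Y is contained in Σ. -/

import Mathlib

open Metric MvPolynomial Set MeasureTheory

noncomputable section

/-- The polynomial hull of a set `X ⊆ ℂ^N`. -/
def polyHull (N : ℕ) (X : Set (Fin N → ℂ)) : Set (Fin N → ℂ) :=
  {z | ∀ p : MvPolynomial (Fin N) ℂ,
    ‖eval z p‖ ≤ sSup ((fun x => ‖eval x p‖) '' X)}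

/-- The polynomial hull of a set `Y ⊆ ℂ^N × ℂ ≅ ℂ^{N+1}`. -/
def polyHullP (N : ℕ) (Y : Set ((Fin N → ℂ) × ℂ)) : Set ((Fin N → ℂ) × ℂ) :=
  {w | ∀ p : MvPolynomial (Fin (N + 1)) ℂ,
    ‖eval (Fin.snoc w.1 w.2) p‖ ≤ sSup ((fun x => ‖eval (Fin.snoc x.1 x.2) p‖) '' Y)}

/-- `u` is plurisubharmonic on `s`: upper semicontinuous and satisfying the
sub-mean-value inequality on every closed complex disc contained in `s`. -/
def PSHOn {E : Type*} [NormedAddCommGroup E] [NormedSpace ℂ E]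
    (u : E → ℝ) (s : Set E) : Prop :=
  UpperSemicontinuousOn u s ∧
  ∀ a b : E, ∀ c : ℂ, ∀ r : ℝ, 0 < r →
    (∀ lam : ℂ, ‖lam - c‖ ≤ r → a + lam • b ∈ s) →
    u (a + c • b) ≤ (2 * Real.pi)⁻¹ *
      ∫ θ in (0:ℝ)..(2 * Real.pi),
        u (a + (c + (r : ℂ) * Complex.exp (θ * Complex.I)) • b)

/-- An open set is pseudoconvex if it admits a continuous plurisubharmonic
exhaustion function. -/
def Pseudoconvex {E : Type*} [NormedAddCommGroup E] [NormedSpace ℂ E]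
    (Ω : Set E) : Prop :=
  ∃ φ : E → ℝ, ContinuousOn φ Ω ∧ PSHOn φ Ω ∧ ∀ c : ℝ, IsCompact {z ∈ Ω | φ z ≤ c}

/-- `S` contains no analytic discs: there is no injective holomorphic map of the
open unit disc into `E` whose image lies in `S`. -/
def ContainsNoAnalyticDiscs {E : Type*} [NormedAddCommGroup E] [NormedSpace ℂ E]
    (S : Set E) : Prop :=
  ¬ ∃ σ : ℂ → E, DifferentiableOn ℂ σ (ball (0:ℂ) 1) ∧
      InjOn σ (ball (0:ℂ) 1) ∧ σ '' ball (0:ℂ) 1 ⊆ S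

/-! When the fibres of `Y` over the compact `X` are uniformly bounded, `Y ⊆ Σ ∩ B̄(0, R)` for
large `R`, so `Ŷ` lies in the hull of `Σ ∩ B̄(0, R)`, which is that set itself. Otherwise every
polynomial `z_{N+1} - c` is unbounded on `Y`, the supremum in `polyHullP` takes its junk value `0`,
so `z_{N+1} = c` on `Ŷ` for every `c` and `Ŷ` is empty. -/

section

variable {N : ℕ}

theorem continuous_norm_eval_snoc (p : MvPolynomial (Fin (N + 1)) ℂ) :
    Continuous fun x : (Fin N → ℂ) × ℂ => ‖eval (Fin.snoc x.1 x.2) p‖ :=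
  ((continuous_eval p).comp (continuous_fst.finSnoc continuous_snd)).norm

theorem polyHullP_empty : polyHullP N ∅ = ∅ :=
  eq_empty_of_forall_notMem fun w hw => by
    have := hw 1
    norm_num at this

theorem polyHullP_mono {Y K : Set ((Fin N → ℂ) × ℂ)} (hYK : Y ⊆ K)
    (hK : Bornology.IsBounded K) : polyHullP N Y ⊆ polyHullP N K := by
  rcases Y.eq_empty_or_nonempty with rfl | hY
  · simp [polyHullP_empty]
  intro w hw p
  have hbdd : BddAbove ((fun x : (Fin N → ℂ) × ℂ => ‖eval (Fin.snoc x.1 x.2) p‖) '' K) :=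
    (hK.isCompact_closure.bddAbove_image (continuous_norm_eval_snoc p).continuousOn).mono
      (image_mono subset_closure)
  exact (hw p).trans (csSup_le_csSup hbdd (hY.image _) (image_mono hYK))

theorem polyHullP_eq_empty_of_not_bddAbove {Y : Set ((Fin N → ℂ) × ℂ)}
    (p : MvPolynomial (Fin (N + 1)) ℂ)
    (hp : ¬ BddAbove ((fun x : (Fin N → ℂ) × ℂ => ‖eval (Fin.snoc x.1 x.2) p‖) '' Y)) :
    polyHullP N Y = ∅ := by
  refine eq_empty_of_forall_notMem fun w hw => ?_
  set c := eval (Fin.snoc w.1 w.2) p + 1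
  have hunbdd : ¬ BddAbove
      ((fun x : (Fin N → ℂ) × ℂ => ‖eval (Fin.snoc x.1 x.2) (p - C c)‖) '' Y) := by
    rintro ⟨M, hM⟩
    refine hp ⟨M + ‖c‖, ?_⟩
    rintro _ ⟨x, hx, rfl⟩
    have hx' := hM ⟨x, hx, rfl⟩
    simp only [eval_sub, eval_C] at hx'
    linarith [norm_le_norm_sub_add (eval (Fin.snoc x.1 x.2) p) c]
  have := hw (p - C c)
  rw [Real.sSup_of_not_bddAbove hunbdd] at this
  norm_num [c] at this

end

theorem hull_subset_Sigma_general (N : ℕ) (S : Set ((Fin N → ℂ) × ℂ))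
    (hpc : ∀ R : ℝ, 0 < R →
      polyHullP N (S ∩ Metric.closedBall 0 R) = S ∩ Metric.closedBall 0 R)
    (X : Set (Fin N → ℂ)) (hX : IsCompact X) :
    polyHullP N {w ∈ S | w.1 ∈ X} ⊆ S := by
  set Y := {w ∈ S | w.1 ∈ X}
  intro w hw
  by_cases hfib : BddAbove ((fun x : (Fin N → ℂ) × ℂ => ‖x.2‖) '' Y)
  · obtain ⟨M, hM⟩ := hfib
    have hYM : Y ⊆ X ×ˢ closedBall 0 M := fun x hx =>
      ⟨hx.2, mem_closedBall_zero_iff.2 (hM ⟨x, hx, rfl⟩)⟩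
    obtain ⟨R, hR, hYR⟩ :=
      ((hX.isBounded.prod isBounded_closedBall).subset hYM).subset_closedBall_lt 0 0
    have hwR := polyHullP_mono (subset_inter (sep_subset _ _) hYR)
      (isBounded_closedBall.subset inter_subset_right) hw
    rw [hpc R hR] at hwR
    exact hwR.1
  · have hY : polyHullP N Y = ∅ :=
      polyHullP_eq_empty_of_not_bddAbove (MvPolynomial.X (Fin.last N)) (by simpa using hfib)
    exact absurd hw (hY ▸ notMem_empty w)

theorem hull_subset_Sigma (N : ℕ) (S : Set ((Fin N → ℂ) × ℂ))
    (hcl : IsClosed S)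
    (hpc : ∀ R : ℝ, 0 < R →
      polyHullP N (S ∩ Metric.closedBall 0 R) = S ∩ Metric.closedBall 0 R)
    (X : Set (Fin N → ℂ)) (hX : IsCompact X) :
    polyHullP N {w ∈ S | w.1 ∈ X} ⊆ S :=
  hull_subset_Sigma_general N S hpc X hX
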